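/- For all s, t, v ∈ V with v ∉ {s, t}, the number of shortest s-t paths through v decomposes over the successor edges of v: σ_{st}(v) = Σ_{w : v ∈ P_s(w)} σ_{st}(v,w), where σ_{st}(v,w) denotes the number of shortest s-t paths in G that use the edge (v,w). -/

import Mathlib

open scoped BigOperators

/-- A directed graph on vertex set `V` with positive real edge weights. -/
structure WDigraph (V : Type*) where
  /-- the edge relation -/
  E : V → V → Prop
  /-- the edge weights -/
  w : V → V → ℝ
  /-- weights of edges are positive -/
  pos : ∀ a b, E a b → 0 < w a b

namespace WDigraph

variable {V : Type*} [Fintype V] [DecidableEq V]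

/-- `p` is a simple path from `s` to `t` in `G`: a nonempty list of pairwise
distinct vertices starting at `s`, ending at `t`, consecutive vertices joined
by edges. (Since all weights are positive, every shortest path is simple, so
it suffices to consider simple paths throughout.) -/
def IsPath (G : WDigraph V) (s t : V) (p : List V) : Prop :=
  List.Chain' G.E p ∧ p.head? = some s ∧ p.getLast? = some t ∧ p.Nodup

/-- The total weight of a list of vertices (sum of the weights of consecutive pairs). -/
def pw (G : WDigraph V) : List V → ℝ
  | [] => 0
  | [_] => 0
  | a :: b :: r => G.w a b + G.pw (b :: r)

/-- `d(s,t)`: shortest-path distance from `s` to `t`, equal to `⊤` (infinity)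
if `t` is unreachable from `s`. -/
noncomputable def dist (G : WDigraph V) (s t : V) : EReal :=
  sInf ((fun p => (G.pw p : EReal)) '' {p | G.IsPath s t p})

/-- The set of shortest `s`-`t` paths in `G`. -/
def SP (G : WDigraph V) (s t : V) : Set (List V) :=
  {p | G.IsPath s t p ∧ (G.pw p : EReal) = G.dist s t}

/-- `σ_{st}`: the number of shortest `s`-`t` paths in `G`. -/
noncomputable def sigma (G : WDigraph V) (s t : V) : ℕ :=
  (G.SP s t).ncard

/-- `σ_{st}(v)`: the number of shortest `s`-`t` paths in `G` that contain `v`. -/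
noncomputable def sigmaV (G : WDigraph V) (s t v : V) : ℕ :=
  {p ∈ G.SP s t | v ∈ p}.ncard

/-- `σ_{st}(v,w)`: the number of shortest `s`-`t` paths in `G` using the edge `(v,w)`. -/
noncomputable def sigmaE (G : WDigraph V) (s t v w : V) : ℕ :=
  {p ∈ G.SP s t | [v, w] <:+: p}.ncard

/-- `P_s(t)`: the set of predecessors of `t` with respect to source `s`:
nodes `y` with `(y,t) ∈ E` and `d(s,y) + ω(y,t) = d(s,t) < ∞`. -/
def pred (G : WDigraph V) (s t : V) : Set V :=
  {y | G.E y t ∧ G.dist s y + (G.w y t : EReal) = G.dist s t ∧ G.dist s t < ⊤}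

/-- `δ_{s•}(v)`: Brandes's one-sided dependency of `s` on `v`
(a summand is `0` whenever its denominator is `0`, which is automatic since
in Lean division by zero yields zero). -/
noncomputable def delta (G : WDigraph V) (s v : V) : ℝ :=
  ∑ᶠ t ∈ {t : V | t ≠ s ∧ t ≠ v}, (G.sigmaV s t v : ℝ) / (G.sigma s t : ℝ)

/-- `c_B(v)`: the betweenness centrality of `v`. -/
noncomputable def bc (G : WDigraph V) (v : V) : ℝ :=
  ∑ᶠ s ∈ {s : V | s ≠ v}, G.delta s v

/-- `G'` is obtained from `G` by the incremental update `(u, v, ω'(u,v))`: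
either a new edge `(u,v) ∉ E` is inserted with positive weight, or the weight
of the existing edge `(u,v)` is decreased; all other edges and weights are
unchanged. (Positivity of all weights is part of the `WDigraph` structure.) -/
structure IsUpdate (G G' : WDigraph V) (u v : V) : Prop where
  /-- the updated edge is present in `G'` -/
  edge' : G'.E u v
  /-- `E' = E ∪ {(u,v)}` -/
  edge_iff : ∀ a b, G'.E a b ↔ G.E a b ∨ a = u ∧ b = v
  /-- `ω'` agrees with `ω` on all edges other than `(u,v)` -/
  weight_eq : ∀ a b, ¬(a = u ∧ b = v) → G'.w a b = G.w a b
  /-- either an insertion of a new edge, or a weight decrease of an existing one -/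
  insert_or_decrease : ¬ G.E u v ∨ (G.E u v ∧ G'.w u v < G.w u v)

/-- `S(t)`: the affected sources of `t`. -/
def affS (G G' : WDigraph V) (t : V) : Set V :=
  {s | G.dist s t > G'.dist s t ∨ G.sigma s t ≠ G'.sigma s t}

/-- `T(s)`: the affected targets of `s`. -/
def affT (G G' : WDigraph V) (s : V) : Set V :=
  {t | G.dist s t > G'.dist s t ∨ G.sigma s t ≠ G'.sigma s t}

/-- `Δ_{s•}(v) = Σ_{t ∈ T(s), t ≠ v} σ_{st}(v)/σ_{st}`, computed in `G`
(`0`-convention for zero denominators). -/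
noncomputable def Delta (G G' : WDigraph V) (s v : V) : ℝ :=
  ∑ᶠ t ∈ {t : V | t ∈ affT G G' s ∧ t ≠ v}, (G.sigmaV s t v : ℝ) / (G.sigma s t : ℝ)

/-- `Δ'_{s•}(v) = Σ_{t ∈ T(s), t ≠ v} σ'_{st}(v)/σ'_{st}`, computed in `G'`
(`0`-convention for zero denominators). -/
noncomputable def Delta' (G G' : WDigraph V) (s v : V) : ℝ :=
  ∑ᶠ t ∈ {t : V | t ∈ affT G G' s ∧ t ≠ v}, (G'.sigmaV s t v : ℝ) / (G'.sigma s t : ℝ)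

end WDigraph

/-!
A shortest `s`-`t` path through `x ≠ t` is simple, so it leaves `x` along exactly one edge
`(x, w)`. Its prefixes ending at `x` and at `w` are again shortest paths, whence
`d(s,x) + ω(x,w) = d(s,w)`, i.e. `x ∈ P_s(w)`. Grouping the paths by this successor `w` gives
the sum. The one technical point is that a walk can be shortened to a simple path of no
larger weight, since the cycles cut out have nonnegative weight.
-/

namespace List

variable {α : Type*}

theorem exists_eq_append_cons_append_cons_of_not_nodup :
    ∀ {l : List α}, ¬l.Nodup → ∃ l₁ a l₂ l₃, l = l₁ ++ a :: (l₂ ++ a :: l₃)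
  | [], h => absurd nodup_nil h
  | b :: r, h => by
    by_cases hb : b ∈ r
    · obtain ⟨l₂, l₃, rfl⟩ := append_of_mem hb
      exact ⟨[], b, l₂, l₃, rfl⟩
    · obtain ⟨l₁, a, l₂, l₃, rfl⟩ :=
        exists_eq_append_cons_append_cons_of_not_nodup fun hr => h (nodup_cons.mpr ⟨hb, hr⟩)
      exact ⟨b :: l₁, a, l₂, l₃, rfl⟩

theorem exists_infix_pair_of_mem_of_getLast?_ne {l : List α} {x : α} (hx : x ∈ l)
    (hlast : l.getLast? ≠ some x) : ∃ y, [x, y] <:+: l := by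
  obtain ⟨l₁, r, rfl⟩ := append_of_mem hx
  cases r with
  | nil => simp at hlast
  | cons y r => exact ⟨y, l₁, r, by simp⟩

theorem Nodup.eq_of_infix_pair {l : List α} (hl : l.Nodup) {x y z : α}
    (hy : [x, y] <:+: l) (hz : [x, z] <:+: l) : y = z := by
  classical
  obtain ⟨l₁, r₁, rfl⟩ := hy
  obtain ⟨l₂, r₂, h⟩ := hz
  simp only [append_assoc, cons_append, nil_append] at hl h
  have hx₁ : x ∉ l₁ := fun hm => (nodup_append'.mp hl).2.2 hm mem_cons_self
  have hx₂ : x ∉ l₂ := fun hm => (nodup_append'.mp (h ▸ hl)).2.2 hm mem_cons_self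
  -- `x` sits at position `l₁.length` and at position `l₂.length` of the same duplicate-free list
  have hlen : l₂.length = l₁.length := by
    have := congrArg (idxOf x) h
    simpa [idxOf_append_of_notMem hx₁, idxOf_append_of_notMem hx₂] using this
  have := (append_inj h hlen).2
  simp only [cons.injEq] at this
  exact this.2.1.symm

end List

namespace WDigraph

section

variable {V : Type*} (G : WDigraph V)

theorem IsPath.isChain {G : WDigraph V} {s t : V} {p : List V} (h : G.IsPath s t p) :
    p.IsChain G.E :=
  h.1

theorem IsPath.getLast?_eq {G : WDigraph V} {s t : V} {p : List V} (h : G.IsPath s t p) :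
    p.getLast? = some t :=
  h.2.2.1

theorem IsPath.nodup {G : WDigraph V} {s t : V} {p : List V} (h : G.IsPath s t p) : p.Nodup :=
  h.2.2.2

theorem pw_append_cons : ∀ (l₁ : List V) (a : V) (l₂ : List V),
    G.pw (l₁ ++ a :: l₂) = G.pw (l₁ ++ [a]) + G.pw (a :: l₂)
  | [], _, _ => by simp [pw]
  | [_], _, _ => by simp [pw]
  | b :: c :: l₁, a, l₂ => by
    have h := pw_append_cons (c :: l₁) a l₂
    simp only [List.cons_append, pw] at h ⊢
    rw [h, add_assoc]

theorem pw_nonneg : ∀ {p : List V}, p.IsChain G.E → 0 ≤ G.pw p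
  | [], _ | [_], _ => le_rfl
  | a :: b :: r, h => by
    rw [List.isChain_cons_cons] at h
    exact add_nonneg (G.pos a b h.1).le (pw_nonneg h.2)

theorem pw_delete_cycle_le {l₁ l₂ l₃ : List V} {a : V}
    (h : (l₁ ++ a :: (l₂ ++ a :: l₃)).IsChain G.E) :
    G.pw (l₁ ++ a :: l₃) ≤ G.pw (l₁ ++ a :: (l₂ ++ a :: l₃)) := by
  have hcycle : 0 ≤ G.pw (a :: l₂ ++ [a]) := G.pw_nonneg (h.infix ⟨l₁, l₃, by simp⟩)
  rw [G.pw_append_cons l₁ a l₃, G.pw_append_cons l₁ a (l₂ ++ a :: l₃),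
    show a :: (l₂ ++ a :: l₃) = a :: l₂ ++ a :: l₃ from rfl, G.pw_append_cons (a :: l₂) a l₃]
  linarith

theorem exists_isPath_pw_le {s t : V} (p : List V) (hc : p.IsChain G.E)
    (hs : p.head? = some s) (ht : p.getLast? = some t) :
    ∃ q, G.IsPath s t q ∧ G.pw q ≤ G.pw p := by
  induction hn : p.length using Nat.strong_induction_on generalizing p with
  | _ n ih =>
  by_cases hnd : p.Nodup
  · exact ⟨p, ⟨hc, hs, ht, hnd⟩, le_rfl⟩
  obtain ⟨l₁, a, l₂, l₃, rfl⟩ := List.exists_eq_append_cons_append_cons_of_not_nodup hnd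
  have hc' : (l₁ ++ a :: l₃).IsChain G.E := by
    have := (hc.prefix (l₁ := l₁ ++ [a]) ⟨l₂ ++ a :: l₃, by simp⟩).append_overlap
      (hc.suffix (l₁ := [a] ++ l₃) ⟨l₁ ++ a :: l₂, by simp⟩) (List.cons_ne_nil a [])
    simpa using this
  have hs' : (l₁ ++ a :: l₃).head? = some s := by cases l₁ <;> simpa using hs
  have ht' : (l₁ ++ a :: l₃).getLast? = some t := by
    rw [List.getLast?_append_cons, ← List.cons_append, List.getLast?_append_cons] at ht
    rwa [List.getLast?_append_cons]
  obtain ⟨q, hq, hle⟩ := ih _ (by simp [← hn]) _ hc' hs' ht' rfl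
  exact ⟨q, hq, hle.trans (G.pw_delete_cycle_le hc)⟩

theorem dist_le_pw {s t : V} {p : List V} (h : G.IsPath s t p) : G.dist s t ≤ G.pw p :=
  sInf_le ⟨p, h, rfl⟩

theorem dist_le_pw_of_isChain {s t : V} {p : List V} (hc : p.IsChain G.E)
    (hs : p.head? = some s) (ht : p.getLast? = some t) : G.dist s t ≤ G.pw p := by
  obtain ⟨q, hq, hle⟩ := G.exists_isPath_pw_le p hc hs ht
  exact (G.dist_le_pw hq).trans (EReal.coe_le_coe_iff.mpr hle)

theorem pw_eq_dist_of_append_cons_mem_SP {s t y : V} {l r : List V}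
    (hp : l ++ y :: r ∈ G.SP s t) : (G.pw (l ++ [y]) : EReal) = G.dist s y := by
  obtain ⟨⟨hc, hs, ht, hnd⟩, hdist⟩ := hp
  have hsy : (l ++ [y]).head? = some s := by cases l <;> simpa using hs
  refine le_antisymm (not_lt.mp fun hlt => ?_)
    (G.dist_le_pw ⟨hc.prefix ⟨r, by simp⟩, hsy, by simp,
      (List.prefix_append (l ++ [y]) r).sublist.nodup (by simpa using hnd)⟩)
  -- a strictly shorter path to `y`, continued along `y :: r`, would beat `d(s,t)`
  obtain ⟨_, ⟨q, hq, rfl⟩, hqlt⟩ := sInf_lt_iff.mp hlt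
  obtain ⟨q', rfl⟩ := List.getLast?_eq_some_iff.mp hq.getLast?_eq
  have hcw : (q' ++ y :: r).IsChain G.E := by
    simpa using hq.isChain.append_overlap (hc.suffix ⟨l, rfl⟩) (List.cons_ne_nil y [])
  have hsw : (q' ++ y :: r).head? = some s := by cases q' <;> simpa using hq.2.1
  have htw : (q' ++ y :: r).getLast? = some t := by
    rw [List.getLast?_append_cons]; rwa [List.getLast?_append_cons] at ht
  have hlt' : G.pw (q' ++ y :: r) < G.pw (l ++ y :: r) := by
    rw [G.pw_append_cons, G.pw_append_cons l]
    linarith [EReal.coe_lt_coe_iff.mp hqlt]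
  exact (G.dist_le_pw_of_isChain hcw hsw htw).not_gt (hdist ▸ EReal.coe_lt_coe_iff.mpr hlt')

theorem mem_pred_of_infix_of_mem_SP {s t x w : V} {p : List V} (hp : p ∈ G.SP s t)
    (hxw : [x, w] <:+: p) : x ∈ G.pred s w := by
  obtain ⟨l, r, rfl⟩ := hxw
  have hp' : l ++ x :: w :: r ∈ G.SP s t := by simpa using hp
  have hx := G.pw_eq_dist_of_append_cons_mem_SP hp'
  have hw := G.pw_eq_dist_of_append_cons_mem_SP (l := l ++ [x]) (by simpa using hp')
  have hsplit : G.pw (l ++ [x] ++ [w]) = G.pw (l ++ [x]) + G.w x w := by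
    rw [List.append_assoc, List.singleton_append, G.pw_append_cons]
    simp [pw]
  refine ⟨List.isChain_pair.mp (hp.1.isChain.infix ⟨l, r, rfl⟩), ?_, ?_⟩
  · rw [← hx, ← hw, hsplit, EReal.coe_add]
  · exact hw ▸ EReal.coe_lt_top _

theorem finite_SP [Fintype V] (s t : V) : (G.SP s t).Finite :=
  (List.finite_length_le V (Fintype.card V)).subset fun _ hp => hp.1.nodup.length_le_card

end

variable {V : Type*} [Fintype V] [DecidableEq V]

theorem sigmaV_eq_sum_sigmaE_general (G : WDigraph V) (s t x : V)
    (hxt : x ≠ t) :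
    G.sigmaV s t x = ∑ᶠ w ∈ {w : V | x ∈ G.pred s w}, G.sigmaE s t x w := by
  have hdisj : {w | x ∈ G.pred s w}.PairwiseDisjoint fun w => {p ∈ G.SP s t | [x, w] <:+: p} :=
    fun w _ w' _ hne => Set.disjoint_left.mpr fun p hp hp' =>
      hne (hp.1.1.nodup.eq_of_infix_pair hp.2 hp'.2)
  refine (congrArg Set.ncard ?_).trans ((Set.toFinite _).ncard_biUnion
    (fun w _ => (G.finite_SP s t).subset (Set.sep_subset _ _)) hdisj)
  ext p
  simp only [Set.mem_iUnion, Set.mem_ofPred_eq, exists_prop]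
  constructor
  · rintro ⟨hp, hxp⟩
    obtain ⟨w, hxw⟩ := List.exists_infix_pair_of_mem_of_getLast?_ne hxp
      (by rw [hp.1.getLast?_eq]; simpa using hxt.symm)
    exact ⟨w, G.mem_pred_of_infix_of_mem_SP hp hxw, hp, hxw⟩
  · rintro ⟨w, -, hp, hxw⟩
    exact ⟨hp, hxw.subset (by simp)⟩

/-- For all `s, t, x ∈ V` with `x ∉ {s, t}`, the number of shortest
`s`-`t` paths through `x` decomposes over the successor edges of `x`:
`σ_{st}(x) = Σ_{w : x ∈ P_s(w)} σ_{st}(x,w)`. -/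
theorem sigmaV_eq_sum_sigmaE (G : WDigraph V) (s t x : V)
    (hxs : x ≠ s) (hxt : x ≠ t) :
    G.sigmaV s t x = ∑ᶠ w ∈ {w : V | x ∈ G.pred s w}, G.sigmaE s t x w :=
  sigmaV_eq_sum_sigmaE_general G s t x hxt

end WDigraph
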